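/- Let μ_W and μ_Γ be compactly supported probability measures on [0,∞), σ > 0, c > 0. The functional equation m_{μ_W}(z) = ∫ dμ_Γ(t) / ( t/(1+σ²c·m_{μ_W}(z)) − (1+σ²c·m_{μ_W}(z))z + σ²(1−c) ) for z in ℂ⁺ is equivalent to the inverse-Stieltjes-transform identity m_{μ_W}^{-1}( z/(1 − σ²cz) ) = (1 − σ²cz)²·m_{μ_Γ}^{-1}(z) + σ²(1−c)(1 − σ²cz) for z in some interval (0, z₁), where inverses are of the Stieltjes transform restricted to the negative real axis. -/

import Mathlib

/-!
With `k = σ²c`, `e = σ²(1 - c)`, `A = 1 + k m_W` and `Z = A² z - e A`, the integrand of (4.1)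
is `A / (t - Z)`, so (4.1) says that `H = m_W - A · m_Γ ∘ Z` vanishes on the upper half-plane.
For `Re z ≤ -1` we have `|m_W(z)| ≤ 1/|z|`, hence `Z z` stays within bounded distance of `z`;
so `H` is holomorphic on the connected union of `ℂ⁺` and a half-plane `Re z < -R`, and by the
identity theorem `H = 0` on `ℂ⁺` iff `H = 0` on `(-∞, -R)`. There everything is real, the
Stieltjes transforms are strictly increasing, and the substitution `x = m_W⁻¹(w)`,
`z = w / (1 + k w)` turns `H(x) = 0` into (4.2).
-/

open MeasureTheory Set Filter Topology Complex

lemma integral_pos_of_ae_pos {α : Type*} [MeasurableSpace α] {μ : Measure α} [NeZero μ]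
    {f : α → ℝ} (hfi : Integrable f μ) (hf : ∀ᵐ x ∂μ, 0 < f x) : 0 < ∫ x, f x ∂μ := by
  rw [integral_pos_iff_support_of_nonneg_ae (hf.mono fun _ => le_of_lt) hfi, pos_iff_ne_zero]
  intro h
  have : ∀ᵐ x ∂μ, False := by
    filter_upwards [hf, measure_eq_zero_iff_ae_notMem.1 h] with x hpos hx
    exact hx hpos.ne'
  exact NeZero.ne μ (ae_eq_bot.1 (Filter.eventually_false_iff_eq_bot.1 this))

noncomputable def stieltjes (μ : Measure ℝ) (z : ℂ) : ℂ := ∫ t, ((t : ℂ) - z)⁻¹ ∂μ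

noncomputable def realStieltjes (μ : Measure ℝ) (x : ℝ) : ℝ := ∫ t, (t - x)⁻¹ ∂μ

lemma stieltjes_ofReal (μ : Measure ℝ) (x : ℝ) : stieltjes μ x = realStieltjes μ x := by
  rw [stieltjes, realStieltjes, ← integral_complex_ofReal]
  push_cast
  rfl

lemma im_le_norm_ofReal_sub (t : ℝ) (z : ℂ) : z.im ≤ ‖(t : ℂ) - z‖ := by
  simpa using neg_le_of_abs_le (abs_im_le_norm ((t : ℂ) - z))

lemma neg_re_le_norm_ofReal_sub {t : ℝ} (ht : 0 ≤ t) (z : ℂ) : -z.re ≤ ‖(t : ℂ) - z‖ := by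
  have := re_le_norm ((t : ℂ) - z)
  simp only [sub_re, ofReal_re] at this
  linarith

lemma norm_le_norm_ofReal_sub {t : ℝ} (ht : 0 ≤ t) {z : ℂ} (hz : z.re ≤ 0) :
    ‖z‖ ≤ ‖(t : ℂ) - z‖ := by
  rw [← sq_le_sq₀ (norm_nonneg _) (norm_nonneg _), Complex.sq_norm, Complex.sq_norm,
    normSq_apply, normSq_apply]
  simp only [sub_re, ofReal_re, sub_im, ofReal_im]
  nlinarith

section FiniteMeasure

variable {μ : Measure ℝ} [IsFiniteMeasure μ] {z : ℂ} {δ : ℝ}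

lemma integrable_inv_ofReal_sub (hδ : 0 < δ) (h : ∀ᵐ t : ℝ ∂μ, δ ≤ ‖(t : ℂ) - z‖) :
    Integrable (fun t : ℝ => ((t : ℂ) - z)⁻¹) μ := by
  refine Integrable.mono' (integrable_const δ⁻¹) (by fun_prop) ?_
  filter_upwards [h] with t ht
  rw [norm_inv]
  exact inv_anti₀ hδ ht

lemma integrable_inv_ofReal_sub_of_im_pos (hz : 0 < z.im) :
    Integrable (fun t : ℝ => ((t : ℂ) - z)⁻¹) μ :=
  integrable_inv_ofReal_sub hz (Eventually.of_forall fun t => im_le_norm_ofReal_sub t z)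

lemma differentiableAt_stieltjes (hδ : 0 < δ) (h : ∀ᵐ t : ℝ ∂μ, δ ≤ ‖(t : ℂ) - z‖) :
    DifferentiableAt ℂ (stieltjes μ) z := by
  have hball : ∀ᵐ t : ℝ ∂μ, ∀ w ∈ Metric.ball z (δ / 2), δ / 2 ≤ ‖(t : ℂ) - w‖ := by
    filter_upwards [h] with t ht w hw
    have := norm_sub_le_norm_sub_add_norm_sub ((t : ℂ)) w z
    rw [mem_ball_iff_norm] at hw
    linarith
  refine (hasDerivAt_integral_of_dominated_loc_of_deriv_le (μ := μ)
    (F' := fun w t => (((t : ℂ) - w) ^ 2)⁻¹) (bound := fun _ => ((δ / 2) ^ 2)⁻¹)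
    (Metric.ball_mem_nhds z (half_pos hδ)) (Eventually.of_forall fun _ => by fun_prop)
    (integrable_inv_ofReal_sub hδ h) (by fun_prop) ?_ (integrable_const _) ?_).2.differentiableAt
  · filter_upwards [hball] with t ht w hw
    rw [norm_inv, norm_pow]
    exact inv_anti₀ (by positivity) (pow_le_pow_left₀ (by positivity) (ht w hw) 2)
  · filter_upwards [hball] with t ht w hw
    have hne : (t : ℂ) - w ≠ 0 := norm_pos_iff.1 ((half_pos hδ).trans_le (ht w hw))
    exact (((hasDerivAt_id w).const_sub (t : ℂ)).inv hne).congr_deriv (by simp)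

end FiniteMeasure

lemma forall_im_pos_eq_zero_iff_forall_real {f : ℂ → ℂ} {R : ℝ}
    (hf : DifferentiableOn ℂ f ({z | 0 < z.im} ∪ {z | z.re < -R})) :
    (∀ z : ℂ, 0 < z.im → f z = 0) ↔ ∀ x : ℝ, x < -R → f x = 0 := by
  have hUo : IsOpen ({z : ℂ | 0 < z.im} ∪ {z | z.re < -R}) :=
    (isOpen_lt continuous_const continuous_im).union (isOpen_lt continuous_re continuous_const)
  have hp : (((-R - 1 : ℝ) : ℂ) + I) ∈ {z : ℂ | 0 < z.im} ∩ {z | z.re < -R} := by simp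
  have hU := IsPreconnected.union _ hp.1 hp.2 (convex_halfSpace_im_gt 0).isPreconnected
    (convex_halfSpace_re_lt _).isPreconnected
  have hfU := hf.analyticOnNhd hUo
  constructor
  · intro h x hx
    refine hfU.eqOn_zero_of_preconnected_of_eventuallyEq_zero hU (Or.inl hp.1) ?_
      (Or.inr (by simpa))
    filter_upwards [(isOpen_lt continuous_const continuous_im).mem_nhds hp.1] with z hz
    exact h z hz
  · intro h z hz
    have hreal : ∃ᶠ x : ℝ in 𝓝[≠] (-R - 1), f x = 0 :=
      (eventually_nhdsWithin_of_eventually_nhds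
        ((eventually_lt_nhds (by linarith : -R - 1 < -R)).mono h)).frequently
    have hmaps : Tendsto ((↑) : ℝ → ℂ) (𝓝[≠] (-R - 1)) (𝓝[≠] ((-R - 1 : ℝ) : ℂ)) :=
      continuous_ofReal.continuousWithinAt.tendsto_nhdsWithin fun _ hx => ofReal_injective.ne hx
    exact hfU.eqOn_zero_of_preconnected_of_frequently_eq_zero hU (Or.inr (by simp))
      (hmaps.frequently hreal) (Or.inl hz)

section ProbabilityMeasure

variable {μ : Measure ℝ} [IsProbabilityMeasure μ] {z : ℂ}

lemma im_stieltjes_pos (hz : 0 < z.im) : 0 < (stieltjes μ z).im := by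
  have hi := integrable_inv_ofReal_sub_of_im_pos (μ := μ) hz
  rw [stieltjes, ← RCLike.im_to_complex, ← integral_im hi]
  refine integral_pos_of_ae_pos hi.im (Eventually.of_forall fun t => ?_)
  have hne : (t : ℂ) - z ≠ 0 := norm_pos_iff.1 (hz.trans_le (im_le_norm_ofReal_sub t z))
  simp only [RCLike.im_to_complex, inv_im, sub_im, ofReal_im, zero_sub, neg_neg]
  exact div_pos hz (normSq_pos.2 hne)

lemma im_mul_stieltjes_nonneg (h0 : ∀ᵐ t ∂μ, 0 ≤ t) (hz : 0 < z.im) :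
    0 ≤ (z * stieltjes μ z).im := by
  have hi := integrable_inv_ofReal_sub_of_im_pos (μ := μ) hz
  rw [stieltjes, ← integral_const_mul, ← RCLike.im_to_complex, ← integral_im (hi.const_mul z)]
  refine integral_nonneg_of_ae ?_
  filter_upwards [h0] with t ht
  have hne : (t : ℂ) - z ≠ 0 := norm_pos_iff.1 (hz.trans_le (im_le_norm_ofReal_sub t z))
  rw [show z * ((t : ℂ) - z)⁻¹ = t * ((t : ℂ) - z)⁻¹ - 1 by field_simp; ring]
  simp only [RCLike.im_to_complex, sub_im, im_ofReal_mul, inv_im, ofReal_im, zero_sub, neg_neg,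
    one_im, sub_zero, Pi.zero_apply]
  exact mul_nonneg ht (div_nonneg hz.le (normSq_nonneg _))

lemma norm_stieltjes_le_inv_norm (h0 : ∀ᵐ t ∂μ, 0 ≤ t) (hz : z.re < 0) :
    ‖stieltjes μ z‖ ≤ ‖z‖⁻¹ := by
  have hz0 : 0 < ‖z‖ := (neg_pos.2 hz).trans_le ((neg_le_abs z.re).trans (abs_re_le_norm z))
  simpa [stieltjes] using norm_integral_le_of_norm_le_const (μ := μ) (h0.mono fun t ht => by
    rw [norm_inv]; exact inv_anti₀ hz0 (norm_le_norm_ofReal_sub ht hz.le))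

variable {x y : ℝ}

lemma integrable_inv_sub_of_neg (h0 : ∀ᵐ t ∂μ, 0 ≤ t) (hx : x < 0) :
    Integrable (fun t => (t - x)⁻¹) μ := by
  refine Integrable.mono' (integrable_const (-x)⁻¹) (by fun_prop) ?_
  filter_upwards [h0] with t ht
  rw [Real.norm_eq_abs, abs_of_pos (inv_pos.2 (by linarith))]
  exact inv_anti₀ (by linarith) (by linarith)

lemma realStieltjes_pos (h0 : ∀ᵐ t ∂μ, 0 ≤ t) (hx : x < 0) : 0 < realStieltjes μ x :=
  integral_pos_of_ae_pos (integrable_inv_sub_of_neg h0 hx)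
    (h0.mono fun t ht => inv_pos.2 (by linarith))

lemma realStieltjes_le_inv_neg (h0 : ∀ᵐ t ∂μ, 0 ≤ t) (hx : x < 0) :
    realStieltjes μ x ≤ (-x)⁻¹ := by
  simpa [realStieltjes] using integral_mono_ae (integrable_inv_sub_of_neg h0 hx)
    (integrable_const (-x)⁻¹) (h0.mono fun t ht => inv_anti₀ (by linarith) (by linarith))

lemma realStieltjes_strictMonoOn (h0 : ∀ᵐ t ∂μ, 0 ≤ t) :
    StrictMonoOn (realStieltjes μ) (Iio 0) := by
  intro x hx y hy hxy
  have hx' := integrable_inv_sub_of_neg h0 hx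
  have hy' := integrable_inv_sub_of_neg h0 hy
  rw [← sub_pos, realStieltjes, realStieltjes, ← integral_sub hy' hx']
  refine integral_pos_of_ae_pos (hy'.sub hx') (h0.mono fun t ht => ?_)
  have : (t - x)⁻¹ < (t - y)⁻¹ := inv_strictAnti₀ (by linarith [mem_Iio.1 hy]) (by linarith)
  simpa using this

end ProbabilityMeasure

lemma sub_sq_mul_sub_mul_eq_mul {A : ℂ} (hA : A ≠ 0) (t z e : ℂ) :
    t - (A ^ 2 * z - e * A) = A * (t / A - A * z + e) := by
  field_simp
  ring

lemma integral_inv_div_sub_mul_add (μ : Measure ℝ) {A : ℂ} (hA : A ≠ 0) (z e : ℂ) :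
    ∫ t, ((t : ℂ) / A - A * z + e)⁻¹ ∂μ = A * stieltjes μ (A ^ 2 * z - e * A) := by
  simp_rw [stieltjes, ← integral_const_mul, sub_sq_mul_sub_mul_eq_mul hA, mul_inv, ← mul_assoc,
    mul_inv_cancel₀ hA, one_mul]

noncomputable def dsFactor (μ : Measure ℝ) (k : ℝ) (z : ℂ) : ℂ := 1 + k * stieltjes μ z

noncomputable def dsSubordination (μ : Measure ℝ) (k e : ℝ) (z : ℂ) : ℂ :=
  dsFactor μ k z ^ 2 * z - e * dsFactor μ k z

noncomputable def dsResidual (μW μΓ : Measure ℝ) (k e : ℝ) (z : ℂ) : ℂ :=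
  stieltjes μW z - dsFactor μW k z * stieltjes μΓ (dsSubordination μW k e z)

def dsRadius (k e : ℝ) : ℝ := k * (2 + k) + |e| * (1 + k) + 1

lemma one_le_dsRadius {k : ℝ} (hk : 0 ≤ k) (e : ℝ) : 1 ≤ dsRadius k e := by
  rw [dsRadius]
  linarith [show 0 ≤ k * (2 + k) + |e| * (1 + k) by positivity]

section Subordination

variable {μ : Measure ℝ} [IsProbabilityMeasure μ] {k e : ℝ} {z : ℂ}

lemma im_le_im_dsFactor_mul (h0 : ∀ᵐ t ∂μ, 0 ≤ t) (hk : 0 ≤ k) (hz : 0 < z.im) :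
    z.im ≤ (dsFactor μ k z * z).im := by
  rw [show dsFactor μ k z * z = z + k * (z * stieltjes μ z) by rw [dsFactor]; ring, add_im,
    im_ofReal_mul]
  exact le_add_of_nonneg_right (mul_nonneg hk (im_mul_stieltjes_nonneg h0 hz))

lemma im_dsFactor_nonneg (hk : 0 ≤ k) (hz : 0 < z.im) : 0 ≤ (dsFactor μ k z).im := by
  simpa [dsFactor] using mul_nonneg hk (im_stieltjes_pos (μ := μ) hz).le

lemma dsFactor_ne_zero (h0 : ∀ᵐ t ∂μ, 0 ≤ t) (hk : 0 ≤ k) (hz : 0 < z.im) : dsFactor μ k z ≠ 0 :=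
  fun h => by simpa [h] using hz.trans_le (im_le_im_dsFactor_mul h0 hk hz)

lemma norm_dsFactor_mul_im_le_norm_sub (h0 : ∀ᵐ t ∂μ, 0 ≤ t) (hk : 0 ≤ k) (hz : 0 < z.im)
    {t : ℝ} (ht : 0 ≤ t) : ‖dsFactor μ k z‖ * z.im ≤ ‖(t : ℂ) - dsSubordination μ k e z‖ := by
  set A := dsFactor μ k z
  rw [dsSubordination, sub_sq_mul_sub_mul_eq_mul (dsFactor_ne_zero h0 hk hz), norm_mul]
  refine mul_le_mul_of_nonneg_left ?_ (norm_nonneg A)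
  have him : ((t : ℂ) / A - A * z + e).im ≤ -z.im := by
    have hAinv : (t / A : ℂ).im ≤ 0 := by
      rw [div_eq_mul_inv, im_ofReal_mul, inv_im]
      exact mul_nonpos_of_nonneg_of_nonpos ht
        (div_nonpos_of_nonpos_of_nonneg (neg_nonpos.2 (im_dsFactor_nonneg hk hz)) (normSq_nonneg _))
    simp only [add_im, sub_im, ofReal_im, add_zero]
    linarith [im_le_im_dsFactor_mul h0 hk hz (μ := μ)]
  exact (le_neg_of_le_neg him).trans ((neg_le_abs _).trans (abs_im_le_norm _))

lemma norm_dsSubordination_sub_le (h0 : ∀ᵐ t ∂μ, 0 ≤ t) (hk : 0 ≤ k) (hz : z.re ≤ -1) :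
    ‖dsSubordination μ k e z - z‖ ≤ k * (2 + k) + |e| * (1 + k) := by
  have hz1 : 1 ≤ ‖z‖ := by linarith [(neg_le_abs z.re).trans (abs_re_le_norm z)]
  have hm := norm_stieltjes_le_inv_norm h0 (by linarith : z.re < 0)
  set ε : ℂ := k * stieltjes μ z
  have hεz : ‖ε * z‖ ≤ k := by
    rw [norm_mul, norm_mul, norm_real, Real.norm_of_nonneg hk, mul_assoc]
    calc k * (‖stieltjes μ z‖ * ‖z‖) ≤ k * (‖z‖⁻¹ * ‖z‖) := by gcongr
      _ = k := by rw [inv_mul_cancel₀ (by positivity), mul_one]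
  have hε : ‖ε‖ ≤ k := by
    calc ‖ε‖ ≤ ‖ε‖ * ‖z‖ := le_mul_of_one_le_right (norm_nonneg _) hz1
      _ ≤ k := by rwa [← norm_mul]
  have hdecomp : dsSubordination μ k e z - z = ε * z * (2 + ε) - e * (1 + ε) := by
    simp only [dsSubordination, dsFactor, ε]
    ring
  rw [hdecomp]
  calc ‖ε * z * (2 + ε) - e * (1 + ε)‖ ≤ ‖ε * z * (2 + ε)‖ + ‖(e : ℂ) * (1 + ε)‖ :=
        norm_sub_le _ _
    _ ≤ k * (2 + k) + |e| * (1 + k) := by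
        rw [norm_mul (ε * z), norm_mul (e : ℂ), norm_real, Real.norm_eq_abs]
        gcongr
        · exact (norm_add_le _ _).trans (by simp [hε])
        · exact (norm_add_le _ _).trans (by simp [hε])

lemma re_dsSubordination_lt (h0 : ∀ᵐ t ∂μ, 0 ≤ t) (hk : 0 ≤ k) (hz : z.re < -dsRadius k e) :
    (dsSubordination μ k e z).re < -1 := by
  have hz1 : z.re ≤ -1 := by linarith [one_le_dsRadius hk e]
  have h := (re_le_norm _).trans (norm_dsSubordination_sub_le (e := e) h0 hk hz1)
  rw [sub_re] at h
  rw [dsRadius] at hz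
  linarith

end Subordination

lemma differentiableAt_dsResidual {μW μΓ : Measure ℝ} {k e : ℝ} {z : ℂ}
    (hW : DifferentiableAt ℂ (stieltjes μW) z)
    (hΓ : DifferentiableAt ℂ (stieltjes μΓ) (dsSubordination μW k e z)) :
    DifferentiableAt ℂ (dsResidual μW μΓ k e) z := by
  have hA : DifferentiableAt ℂ (dsFactor μW k) z := by unfold dsFactor; fun_prop
  have hZ : DifferentiableAt ℂ (dsSubordination μW k e) z := by unfold dsSubordination; fun_prop
  exact hW.sub (hA.mul (hΓ.comp z hZ))

lemma differentiableOn_dsResidual {μW μΓ : Measure ℝ} [IsProbabilityMeasure μW]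
    [IsProbabilityMeasure μΓ] {k e : ℝ} (hW0 : ∀ᵐ t ∂μW, 0 ≤ t) (hΓ0 : ∀ᵐ t ∂μΓ, 0 ≤ t)
    (hk : 0 ≤ k) :
    DifferentiableOn ℂ (dsResidual μW μΓ k e) ({z | 0 < z.im} ∪ {z | z.re < -dsRadius k e}) := by
  refine fun z hz => DifferentiableAt.differentiableWithinAt ?_
  rcases hz with hz | hz
  · have hA := norm_pos_iff.2 (dsFactor_ne_zero hW0 hk hz)
    exact differentiableAt_dsResidual
      (differentiableAt_stieltjes hz (Eventually.of_forall fun t => im_le_norm_ofReal_sub t z))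
      (differentiableAt_stieltjes (mul_pos hA hz)
        (hΓ0.mono fun t ht => norm_dsFactor_mul_im_le_norm_sub hW0 hk hz ht))
  · have hz' : z.re < -dsRadius k e := hz
    have hz1 : z.re < -1 := by linarith [one_le_dsRadius hk e]
    have hZ := re_dsSubordination_lt hW0 hk hz'
    exact differentiableAt_dsResidual
      (differentiableAt_stieltjes one_pos
        (hW0.mono fun t ht => by linarith [neg_re_le_norm_ofReal_sub ht z]))
      (differentiableAt_stieltjes one_pos (hΓ0.mono fun t ht => by
        linarith [neg_re_le_norm_ofReal_sub ht (dsSubordination μW k e z)]))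

section RealAxis

variable {μW μΓ : Measure ℝ} {k e : ℝ}

lemma dsFactor_ofReal (x : ℝ) : dsFactor μW k x = ((1 + k * realStieltjes μW x : ℝ) : ℂ) := by
  rw [dsFactor, stieltjes_ofReal]
  push_cast
  rfl

lemma dsSubordination_ofReal (x : ℝ) :
    dsSubordination μW k e x = (((1 + k * realStieltjes μW x) ^ 2 * x
      - e * (1 + k * realStieltjes μW x) : ℝ) : ℂ) := by
  rw [dsSubordination, dsFactor_ofReal]
  push_cast
  rfl

lemma dsResidual_ofReal (x : ℝ) :
    dsResidual μW μΓ k e x = ((realStieltjes μW x - (1 + k * realStieltjes μW x) *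
      realStieltjes μΓ ((1 + k * realStieltjes μW x) ^ 2 * x
        - e * (1 + k * realStieltjes μW x)) : ℝ) : ℂ) := by
  rw [dsResidual, dsSubordination_ofReal, dsFactor_ofReal, stieltjes_ofReal, stieltjes_ofReal]
  push_cast
  rfl

end RealAxis

def IsStieltjesInvOn (μ : Measure ℝ) (g : ℝ → ℝ) (z₀ : ℝ) : Prop :=
  ∀ z ∈ Ioo 0 z₀, g z < 0 ∧ realStieltjes μ (g z) = z

lemma IsStieltjesInvOn.apply_eq_iff {μ : Measure ℝ} [IsProbabilityMeasure μ] {g : ℝ → ℝ}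
    {z₀ z x : ℝ} (hg : IsStieltjesInvOn μ g z₀) (h0 : ∀ᵐ t ∂μ, 0 ≤ t) (hz : z ∈ Ioo 0 z₀)
    (hx : x < 0) : g z = x ↔ realStieltjes μ x = z :=
  ⟨fun h => h ▸ (hg z hz).2,
    fun h => (realStieltjes_strictMonoOn h0).injOn (hg z hz).1 hx ((hg z hz).2.trans h.symm)⟩

section Reparametrization

variable {k w : ℝ}

lemma one_sub_mul_div_one_add_mul (hkw : 1 + k * w ≠ 0) :
    1 - k * (w / (1 + k * w)) = (1 + k * w)⁻¹ := by
  field_simp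
  ring

lemma div_one_sub_mul_div_one_add_mul (hkw : 1 + k * w ≠ 0) :
    w / (1 + k * w) / (1 - k * (w / (1 + k * w))) = w := by
  rw [one_sub_mul_div_one_add_mul hkw, div_inv_eq_mul, div_mul_cancel₀ _ hkw]

lemma exists_div_one_add_mul_eq (hk : 0 ≤ k) {w₁ z : ℝ} (hw₁ : 0 < w₁)
    (hz : z ∈ Ioo 0 (w₁ / (1 + k * w₁))) : ∃ w ∈ Ioo 0 w₁, w / (1 + k * w) = z := by
  obtain ⟨hz0, hz1⟩ := hz
  have ha : 0 < 1 + k * w₁ := by positivity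
  rw [lt_div_iff₀ ha] at hz1
  have hu : 0 < 1 - k * z := by nlinarith
  refine ⟨z / (1 - k * z), ⟨by positivity, by rw [div_lt_iff₀ hu]; nlinarith⟩, ?_⟩
  rw [show 1 + k * (z / (1 - k * z)) = (1 - k * z)⁻¹ by field_simp; ring, div_inv_eq_mul,
    div_mul_cancel₀ _ hu.ne']

lemma div_one_add_mul_mem_Ioo (hk : 0 ≤ k) {z₁ : ℝ} (hw : w ∈ Ioo 0 z₁) :
    w / (1 + k * w) ∈ Ioo 0 z₁ :=
  ⟨by have := hw.1; positivity, (div_le_self hw.1.le (by nlinarith [hw.1])).trans_lt hw.2⟩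

end Reparametrization

/-- The two sides are (4.2) at `z = w / (1 + k w)` and `H(x) = 0` for `m_W(x) = w`. -/
lemma inverse_identity_iff {μΓ : Measure ℝ} [IsProbabilityMeasure μΓ] {gΓ : ℝ → ℝ}
    {z₀ k e w x : ℝ} (hΓ0 : ∀ᵐ t ∂μΓ, 0 ≤ t) (hΓ : IsStieltjesInvOn μΓ gΓ z₀) (hk : 0 ≤ k)
    (hw : w ∈ Ioo 0 z₀) (hy : (1 + k * w) ^ 2 * x - e * (1 + k * w) < 0) :
    x = (1 + k * w)⁻¹ ^ 2 * gΓ (w / (1 + k * w)) + e * (1 + k * w)⁻¹ ↔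
      w = (1 + k * w) * realStieltjes μΓ ((1 + k * w) ^ 2 * x - e * (1 + k * w)) := by
  have hwa := div_one_add_mul_mem_Ioo hk hw
  set a := 1 + k * w
  have ha0 : a ≠ 0 := by nlinarith [hw.1]
  calc x = a⁻¹ ^ 2 * gΓ (w / a) + e * a⁻¹ ↔ gΓ (w / a) = a ^ 2 * x - e * a := by
        constructor <;> intro h <;> rw [h] <;> field_simp <;> ring
    _ ↔ realStieltjes μΓ (a ^ 2 * x - e * a) = w / a := hΓ.apply_eq_iff hΓ0 hwa hy
    _ ↔ _ := by rw [eq_div_iff ha0, mul_comm, eq_comm]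

lemma forall_dsEquation_iff {μW μΓ : Measure ℝ} [IsProbabilityMeasure μW] {k e : ℝ}
    (hW0 : ∀ᵐ t ∂μW, 0 ≤ t) (hk : 0 ≤ k) :
    (∀ z : ℂ, 0 < z.im → stieltjes μW z =
      ∫ t, ((t : ℂ) / dsFactor μW k z - dsFactor μW k z * z + e)⁻¹ ∂μΓ) ↔
      ∀ z : ℂ, 0 < z.im → dsResidual μW μΓ k e z = 0 :=
  forall₂_congr fun z hz => by
    rw [dsResidual, sub_eq_zero, integral_inv_div_sub_mul_add _ (dsFactor_ne_zero hW0 hk hz)]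
    rfl

section Equivalence

variable {μW μΓ : Measure ℝ} [IsProbabilityMeasure μW] [IsProbabilityMeasure μΓ]
  {gW gΓ : ℝ → ℝ} {z₀ k e : ℝ}

lemma dsSubordination_ofReal_lt {x : ℝ} (hW0 : ∀ᵐ t ∂μW, 0 ≤ t) (hk : 0 ≤ k)
    (hx : x < -dsRadius k e) :
    (1 + k * realStieltjes μW x) ^ 2 * x - e * (1 + k * realStieltjes μW x) < -1 := by
  have := re_dsSubordination_lt (e := e) hW0 hk (z := x) (by simpa using hx)
  rwa [dsSubordination_ofReal, ofReal_re] at this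

lemma exists_inverse_identity_of_dsResidual (hW0 : ∀ᵐ t ∂μW, 0 ≤ t) (hΓ0 : ∀ᵐ t ∂μΓ, 0 ≤ t)
    (hW : IsStieltjesInvOn μW gW z₀) (hΓ : IsStieltjesInvOn μΓ gΓ z₀) (hz₀ : 0 < z₀)
    (hk : 0 ≤ k) (h : ∀ x : ℝ, x < -dsRadius k e → dsResidual μW μΓ k e x = 0) :
    ∃ z₁ > 0, ∀ z ∈ Ioo 0 z₁,
      gW (z / (1 - k * z)) = (1 - k * z) ^ 2 * gΓ z + e * (1 - k * z) := by
  have hR := one_le_dsRadius hk e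
  set w₁ := min z₀ (realStieltjes μW (-dsRadius k e))
  have hw₁ : 0 < w₁ := lt_min hz₀ (realStieltjes_pos hW0 (by linarith))
  refine ⟨w₁ / (1 + k * w₁), by positivity, fun z hz => ?_⟩
  obtain ⟨w, hw, rfl⟩ := exists_div_one_add_mul_eq hk hw₁ hz
  have hwW : w ∈ Ioo 0 z₀ := Ioo_subset_Ioo_right (min_le_left _ _) hw
  have ha : 1 + k * w ≠ 0 := by nlinarith [hw.1]
  rw [div_one_sub_mul_div_one_add_mul ha, one_sub_mul_div_one_add_mul ha]
  obtain ⟨hx0, hxw⟩ := hW w hwW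
  have hxR : gW w < -dsRadius k e := by
    by_contra! hle
    have hR0 : -dsRadius k e ∈ Iio 0 := by rw [mem_Iio]; linarith
    have := (realStieltjes_strictMonoOn hW0).monotoneOn hR0 hx0 hle
    linarith [hw.2, min_le_right z₀ (realStieltjes μW (-dsRadius k e))]
  have hres := h _ hxR
  rw [dsResidual_ofReal, hxw, ofReal_eq_zero, sub_eq_zero] at hres
  have hy := dsSubordination_ofReal_lt hW0 hk hxR
  rw [hxw] at hy
  exact (inverse_identity_iff hΓ0 hΓ hk hwW (by linarith)).2 hres

lemma exists_dsResidual_eq_zero_of_inverse_identity (hW0 : ∀ᵐ t ∂μW, 0 ≤ t)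
    (hΓ0 : ∀ᵐ t ∂μΓ, 0 ≤ t) (hW : IsStieltjesInvOn μW gW z₀) (hΓ : IsStieltjesInvOn μΓ gΓ z₀)
    (hz₀ : 0 < z₀) (hk : 0 ≤ k)
    (h : ∃ z₁ > 0, ∀ z ∈ Ioo 0 z₁,
      gW (z / (1 - k * z)) = (1 - k * z) ^ 2 * gΓ z + e * (1 - k * z)) :
    ∃ R ≥ dsRadius k e, ∀ x : ℝ, x < -R → dsResidual μW μΓ k e x = 0 := by
  obtain ⟨z₁, hz₁, h⟩ := h
  refine ⟨max (dsRadius k e) (min z₀ z₁)⁻¹, le_max_left _ _, fun x hx => ?_⟩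
  have hxR : x < -dsRadius k e := by linarith [le_max_left (dsRadius k e) (min z₀ z₁)⁻¹]
  have hx0 : x < 0 := by linarith [one_le_dsRadius hk e]
  set w := realStieltjes μW x with hw_def
  have hw : w ∈ Ioo 0 (min z₀ z₁) :=
    ⟨realStieltjes_pos hW0 hx0, (realStieltjes_le_inv_neg hW0 hx0).trans_lt <|
      inv_lt_of_inv_lt₀ (lt_min hz₀ hz₁) (by linarith [le_max_right (dsRadius k e) (min z₀ z₁)⁻¹])⟩
  have hwW : w ∈ Ioo 0 z₀ := Ioo_subset_Ioo_right (min_le_left _ _) hw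
  have ha : 1 + k * w ≠ 0 := by nlinarith [hw.1]
  have hid := h _ (div_one_add_mul_mem_Ioo hk (Ioo_subset_Ioo_right (min_le_right _ _) hw))
  rw [div_one_sub_mul_div_one_add_mul ha, one_sub_mul_div_one_add_mul ha,
    (hW.apply_eq_iff hW0 hwW hx0).2 hw_def.symm] at hid
  rw [dsResidual_ofReal, ofReal_eq_zero, sub_eq_zero]
  exact (inverse_identity_iff hΓ0 hΓ hk hwW
    (by linarith [dsSubordination_ofReal_lt (e := e) hW0 hk hxR])).1 hid

end Equivalence

theorem stmt16_general (μW μΓ : Measure ℝ) [IsProbabilityMeasure μW] [IsProbabilityMeasure μΓ]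
    (bW bΓ : ℝ) (hWsupp : μW (Set.Icc 0 bW)ᶜ = 0) (hΓsupp : μΓ (Set.Icc 0 bΓ)ᶜ = 0)
    (σ c : ℝ) (hc : 0 < c)
    (mWinv mΓinv : ℝ → ℝ) (z₀ : ℝ) (hz₀ : 0 < z₀)
    (hmW : ∀ z ∈ Set.Ioo 0 z₀, mWinv z < 0 ∧ (∫ t, (t - mWinv z)⁻¹ ∂μW) = z)
    (hmΓ : ∀ z ∈ Set.Ioo 0 z₀, mΓinv z < 0 ∧ (∫ t, (t - mΓinv z)⁻¹ ∂μΓ) = z) :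
    (∀ z : ℂ, 0 < z.im →
        (∫ t, ((t : ℂ) - z)⁻¹ ∂μW) =
          ∫ t, ((t : ℂ) / (1 + (σ : ℂ) ^ 2 * (c : ℂ) * ∫ s, ((s : ℂ) - z)⁻¹ ∂μW)
              - (1 + (σ : ℂ) ^ 2 * (c : ℂ) * ∫ s, ((s : ℂ) - z)⁻¹ ∂μW) * z
              + (σ : ℂ) ^ 2 * (1 - (c : ℂ)))⁻¹ ∂μΓ)
    ↔ (∃ z₁ > 0, ∀ z ∈ Set.Ioo 0 z₁,
        mWinv (z / (1 - σ ^ 2 * c * z))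
          = (1 - σ ^ 2 * c * z) ^ 2 * mΓinv z + σ ^ 2 * (1 - c) * (1 - σ ^ 2 * c * z)) := by
  have hk : 0 ≤ σ ^ 2 * c := by positivity
  have hW0 : ∀ᵐ t ∂μW, 0 ≤ t := mem_of_superset (mem_ae_iff.2 hWsupp) fun _ ht => ht.1
  have hΓ0 : ∀ᵐ t ∂μΓ, 0 ≤ t := mem_of_superset (mem_ae_iff.2 hΓsupp) fun _ ht => ht.1
  have hH := differentiableOn_dsResidual (e := σ ^ 2 * (1 - c)) hW0 hΓ0 hk
  rw [show (σ : ℂ) ^ 2 * c = ((σ ^ 2 * c : ℝ) : ℂ) by push_cast; ring,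
    show (σ : ℂ) ^ 2 * (1 - c) = ((σ ^ 2 * (1 - c) : ℝ) : ℂ) by push_cast; ring]
  refine (forall_dsEquation_iff hW0 hk).trans ⟨fun h => ?_, fun h => ?_⟩
  · exact exists_inverse_identity_of_dsResidual hW0 hΓ0 hmW hmΓ hz₀ hk
      ((forall_im_pos_eq_zero_iff_forall_real hH).1 h)
  · obtain ⟨R, hR, hres⟩ := exists_dsResidual_eq_zero_of_inverse_identity hW0 hΓ0 hmW hmΓ hz₀ hk h
    refine (forall_im_pos_eq_zero_iff_forall_real (hH.mono ?_)).2 hres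
    exact union_subset_union_right _ fun z (hz : z.re < -R) => show z.re < _ by linarith

/-- equivalence of the Dozier–Silverstein functional equation
(4.1) on `ℂ⁺` with the inverse-Stieltjes-transform identity (4.2) on an
interval `(0, z₁)`, the inverses being taken on the negative real axis. -/
theorem stmt16 (μW μΓ : Measure ℝ) [IsProbabilityMeasure μW] [IsProbabilityMeasure μΓ]
    (bW bΓ : ℝ) (hWsupp : μW (Set.Icc 0 bW)ᶜ = 0) (hΓsupp : μΓ (Set.Icc 0 bΓ)ᶜ = 0)
    (σ c : ℝ) (hσ : 0 < σ) (hc : 0 < c)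
    (mWinv mΓinv : ℝ → ℝ) (z₀ : ℝ) (hz₀ : 0 < z₀)
    (hmW : ∀ z ∈ Set.Ioo 0 z₀, mWinv z < 0 ∧ (∫ t, (t - mWinv z)⁻¹ ∂μW) = z)
    (hmΓ : ∀ z ∈ Set.Ioo 0 z₀, mΓinv z < 0 ∧ (∫ t, (t - mΓinv z)⁻¹ ∂μΓ) = z) :
    (∀ z : ℂ, 0 < z.im →
        (∫ t, ((t : ℂ) - z)⁻¹ ∂μW) =
          ∫ t, ((t : ℂ) / (1 + (σ : ℂ) ^ 2 * (c : ℂ) * ∫ s, ((s : ℂ) - z)⁻¹ ∂μW)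
              - (1 + (σ : ℂ) ^ 2 * (c : ℂ) * ∫ s, ((s : ℂ) - z)⁻¹ ∂μW) * z
              + (σ : ℂ) ^ 2 * (1 - (c : ℂ)))⁻¹ ∂μΓ)
    ↔ (∃ z₁ > 0, ∀ z ∈ Set.Ioo 0 z₁,
        mWinv (z / (1 - σ ^ 2 * c * z))
          = (1 - σ ^ 2 * c * z) ^ 2 * mΓinv z + σ ^ 2 * (1 - c) * (1 - σ ^ 2 * c * z)) :=
  stmt16_general μW μΓ bW bΓ hWsupp hΓsupp σ c hc mWinv mΓinv z₀ hz₀ hmW hmΓ
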